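/- Under time reparametrization by a freezing control: if x̃ solves ẋ̃(s) = f(x̃(s), u(s))·μ(s) on [t,T] with x̃(t) = x₀, and x solves ẋ(s) = f(x(s), u(σ_μ⁻¹(s))) on [t, σ_μ(T)] with x(t) = x₀ (f Lipschitz), then x(σ_μ(s)) = x̃(s) for all s ∈ [t,T]. -/

import Mathlib

open MeasureTheory Set intervalIntegral
open scoped NNReal ENNReal Topology

lemma null_image_of_pointwise_lip {G : ℝ → ℝ} {E : Set ℝ} (hE : volume E = 0)
    (h : ∀ s ∈ E, ∃ C : ℝ, ∃ δ : ℝ, 0 < δ ∧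
      ∀ s', |s' - s| ≤ δ → |G s' - G s| ≤ C * |s' - s|) :
    volume (G '' E) = 0 := by
  set P : ℕ → ℤ → Set ℝ := fun k j =>
    ({s | s ∈ E ∧ ∀ s', |s' - s| ≤ ((k : ℝ) + 1)⁻¹ → |G s' - G s| ≤ ((k : ℝ) + 1) * |s' - s|}
      ∩ Icc ((j : ℝ) * ((k : ℝ) + 1)⁻¹) (((j : ℝ) + 1) * ((k : ℝ) + 1)⁻¹)) with hP
  have hcover : E ⊆ ⋃ (k : ℕ) (j : ℤ), P k j := by
    intro s hs
    obtain ⟨C, δ, hδ, hCδ⟩ := h s hs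
    obtain ⟨k, hk⟩ := exists_nat_ge (max C δ⁻¹)
    have hkpos : (0:ℝ) < (k : ℝ) + 1 := by positivity
    have hkC : C ≤ (k : ℝ) + 1 := le_trans (le_max_left _ _) (by linarith)
    have hkδ : ((k : ℝ) + 1)⁻¹ ≤ δ := by
      have h1 : δ⁻¹ ≤ (k : ℝ) + 1 := le_trans (le_max_right _ _) (by linarith)
      exact inv_le_of_inv_le₀ hδ h1
    refine mem_iUnion.2 ⟨k, mem_iUnion.2 ⟨⌊s * ((k : ℝ) + 1)⌋, ⟨⟨hs, ?_⟩, ?_, ?_⟩⟩⟩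
    · intro s' hs'
      exact le_trans (hCδ s' (le_trans hs' hkδ))
        (mul_le_mul_of_nonneg_right hkC (abs_nonneg _))
    · have h2 : s * ((k : ℝ) + 1) * ((k : ℝ) + 1)⁻¹ = s := by field_simp
      have h3 := mul_le_mul_of_nonneg_right (Int.floor_le (s * ((k : ℝ) + 1)))
        (inv_nonneg.2 hkpos.le)
      linarith
    · have h2 : s * ((k : ℝ) + 1) * ((k : ℝ) + 1)⁻¹ = s := by field_simp
      have h3 := mul_le_mul_of_nonneg_right (Int.lt_floor_add_one (s * ((k : ℝ) + 1))).le
        (inv_nonneg.2 hkpos.le)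
      push_cast at h3 ⊢
      linarith
  have hnull : ∀ (k : ℕ) (j : ℤ), volume (G '' P k j) = 0 := by
    intro k j
    have hlip : LipschitzOnWith ((k + 1 : ℕ) : ℝ≥0) G (P k j) := by
      apply LipschitzOnWith.of_dist_le_mul
      intro p hp q hq
      have hd : |q - p| ≤ ((k : ℝ) + 1)⁻¹ := by
        have h1 := hp.2; have h2 := hq.2
        rw [abs_le]
        constructor <;> nlinarith [h1.1, h1.2, h2.1, h2.2]
      have h3 := hp.1.2 q hd
      rw [Real.dist_eq, Real.dist_eq, abs_sub_comm (G p) (G q), abs_sub_comm p q]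
      refine le_trans h3 (le_of_eq ?_)
      push_cast
      ring
    have h2 : volume (P k j) = 0 :=
      measure_mono_null (fun z hz => hz.1.1) hE
    have h1 := hlip.hausdorffMeasure_image_le (d := 1) zero_le_one
    rw [hausdorffMeasure_real] at h1
    rw [h2, mul_zero] at h1
    exact le_antisymm h1 zero_le
  refine measure_mono_null (image_mono hcover) ?_
  rw [image_iUnion]
  refine measure_iUnion_null fun k => ?_
  rw [image_iUnion]
  exact measure_iUnion_null fun j => hnull k j

lemma mu_intervalIntegrable {μ : ℝ → ℝ} (hmeas : Measurable μ)
    (hμ : ∀ s, μ s ∈ Set.Icc (0:ℝ) 1) (a b : ℝ) :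
    IntervalIntegrable μ volume a b := by
  rw [intervalIntegrable_iff]
  refine Integrable.mono' (g := fun _ => (1:ℝ))
    (integrableOn_const ?_) hmeas.aestronglyMeasurable.restrict ?_
  · exact measure_Ioc_lt_top.ne
  · filter_upwards with y
    have := hμ y
    rw [Real.norm_eq_abs, abs_le]
    constructor <;> linarith [this.1, this.2]

lemma abs_mu_integrableOn {μ : ℝ → ℝ} (hmeas : Measurable μ)
    (hμ : ∀ s, μ s ∈ Set.Icc (0:ℝ) 1) (c : ℝ) {S : Set ℝ} (hSfin : volume S < ⊤) :
    IntegrableOn (fun y => ‖μ y - c‖) S := by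
  refine Integrable.mono' (g := fun _ => 1 + |c|)
    (integrableOn_const hSfin.ne)
    ((hmeas.sub measurable_const).norm.aestronglyMeasurable.restrict) ?_
  filter_upwards with y
  have := hμ y
  rw [Real.norm_eq_abs, Real.norm_eq_abs, abs_abs]
  have h1 : |μ y - c| ≤ |μ y| + |c| := abs_sub _ _
  have h2 : |μ y| ≤ 1 := by rw [abs_le]; constructor <;> linarith [this.1, this.2]
  linarith

/-- key integral bound at radius r -/
lemma key_bound {μ : ℝ → ℝ} (hmeas : Measurable μ)
    (hμ : ∀ s, μ s ∈ Set.Icc (0:ℝ) 1) (s : ℝ) {r : ℝ} (hr : 0 < r)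
    {p q : ℝ} (hpq : p ≤ q) (hsub : Set.Ioc p q ⊆ Metric.closedBall s r) :
    |(∫ τ in p..q, μ τ) - (q - p) * μ s| ≤
      2 * r * ⨍ y in Metric.closedBall s r, ‖μ y - μ s‖ := by
  have hInt := mu_intervalIntegrable hmeas hμ p q
  have hIntc : IntervalIntegrable (fun _ => μ s) volume p q := intervalIntegrable_const
  have h1 : (∫ τ in p..q, μ τ) - (q - p) * μ s = ∫ τ in p..q, (μ τ - μ s) := by
    rw [intervalIntegral.integral_sub hInt hIntc, intervalIntegral.integral_const, smul_eq_mul]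
  rw [h1]
  have h2 : |∫ τ in p..q, (μ τ - μ s)| ≤ ∫ τ in p..q, ‖μ τ - μ s‖ := by
    simpa [Real.norm_eq_abs] using
      intervalIntegral.norm_integral_le_integral_norm (f := fun τ => μ τ - μ s) hpq
  have hfin : volume (Metric.closedBall s r) < ⊤ := measure_closedBall_lt_top
  have h3 : (∫ τ in p..q, ‖μ τ - μ s‖) ≤ ∫ y in Metric.closedBall s r, ‖μ y - μ s‖ := by
    rw [intervalIntegral.integral_of_le hpq]
    refine setIntegral_mono_set (abs_mu_integrableOn hmeas hμ (μ s) hfin)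
      (Filter.Eventually.of_forall fun y => norm_nonneg _) (HasSubset.Subset.eventuallyLE hsub)
  have h4 : (∫ y in Metric.closedBall s r, ‖μ y - μ s‖) =
      2 * r * ⨍ y in Metric.closedBall s r, ‖μ y - μ s‖ := by
    rw [setAverage_eq, smul_eq_mul, Real.volume_real_closedBall (by linarith)]
    rw [← mul_assoc, mul_inv_cancel₀ (by linarith), one_mul]
  calc |∫ τ in p..q, (μ τ - μ s)| ≤ _ := h2
    _ ≤ _ := h3
    _ = _ := h4

lemma mu_locallyIntegrable {μ : ℝ → ℝ} (hmeas : Measurable μ)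
    (hμ : ∀ s, μ s ∈ Set.Icc (0:ℝ) 1) : LocallyIntegrable μ volume := by
  rw [locallyIntegrable_iff]
  intro k hk
  refine Integrable.mono' (g := fun _ => (1:ℝ))
    (integrableOn_const hk.measure_lt_top.ne) hmeas.aestronglyMeasurable.restrict ?_
  filter_upwards with y
  have := hμ y
  rw [Real.norm_eq_abs, abs_le]
  constructor <;> linarith [this.1, this.2]

lemma ae_good {μ : ℝ → ℝ} (hmeas : Measurable μ)
    (hμ : ∀ s, μ s ∈ Set.Icc (0:ℝ) 1) (t : ℝ) :
    ∀ᵐ s : ℝ, HasDerivAt (fun r => t + ∫ τ in t..r, μ τ) (μ s) s ∧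
      (μ s ≠ 0 → ∀ a, a < s → 0 < ∫ τ in a..s, μ τ) := by
  have hInt := mu_intervalIntegrable hmeas hμ
  filter_upwards [IsUnifLocDoublingMeasure.ae_tendsto_average_norm_sub (μ := volume)
    (mu_locallyIntegrable hmeas hμ) 1] with s hs
  have hmem : ∀ᶠ r in 𝓝[>] (0:ℝ), s ∈ Metric.closedBall s (1 * r) := by
    filter_upwards [self_mem_nhdsWithin] with r hr
    rw [Metric.mem_closedBall, dist_self, one_mul]
    exact le_of_lt hr
  have hLs : Filter.Tendsto (fun r => ⨍ y in Metric.closedBall s r, ‖μ y - μ s‖)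
      (𝓝[>] (0:ℝ)) (𝓝 0) := hs (fun _ => s) (fun r => r) Filter.tendsto_id hmem
  constructor
  · rw [hasDerivAt_iff_tendsto_slope]
    have hcomp : Filter.Tendsto (fun x' => |x' - s|) (𝓝[≠] s) (𝓝[>] (0:ℝ)) := by
      rw [tendsto_nhdsWithin_iff]
      constructor
      · have : Filter.Tendsto (fun x' => |x' - s|) (𝓝 s) (𝓝 |s - s|) :=
          ((continuous_id.sub continuous_const).abs.tendsto s)
        simpa using this.mono_left nhdsWithin_le_nhds
      · filter_upwards [self_mem_nhdsWithin] with x' hx'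
        exact abs_pos.2 (sub_ne_zero.2 hx')
    have hbnd := hLs.comp hcomp
    rw [tendsto_iff_dist_tendsto_zero]
    refine squeeze_zero' (Filter.Eventually.of_forall fun _ => dist_nonneg) ?_
      (by simpa using hbnd.const_mul 2)
    filter_upwards [self_mem_nhdsWithin] with x' hx'
    have hne : x' ≠ s := hx'
    have hr : 0 < |x' - s| := abs_pos.2 (sub_ne_zero.2 hne)
    have hσ : (t + ∫ τ in t..x', μ τ) - (t + ∫ τ in t..s, μ τ) = ∫ τ in s..x', μ τ := by
      have := integral_add_adjacent_intervals (hInt t s) (hInt s x')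
      linarith
    have hslope : slope (fun r => t + ∫ τ in t..r, μ τ) s x'
        = (∫ τ in s..x', μ τ) / (x' - s) := by
      simp only [slope_def_field]
      rw [hσ]
    have hdist : dist (slope (fun r => t + ∫ τ in t..r, μ τ) s x') (μ s) =
        |x' - s|⁻¹ * |(∫ τ in s..x', μ τ) - (x' - s) * μ s| := by
      rw [Real.dist_eq, hslope]
      have h5 : (∫ τ in s..x', μ τ) / (x' - s) - μ s
          = ((∫ τ in s..x', μ τ) - (x' - s) * μ s) / (x' - s) := by
        have hne' := sub_ne_zero.2 hne
        rw [eq_div_iff hne', sub_mul, div_mul_cancel₀ _ hne']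
        ring
      rw [h5, abs_div, div_eq_inv_mul]
    rw [hdist]
    rcases lt_or_gt_of_ne hne with hlt | hgt
    · have habs : |x' - s| = s - x' := by
        rw [abs_sub_comm]; exact abs_of_pos (by linarith)
      have hsub : Set.Ioc x' s ⊆ Metric.closedBall s |x' - s| := by
        intro y hy
        rw [Metric.mem_closedBall, Real.dist_eq, abs_le, habs]
        exact ⟨by linarith [hy.1], by linarith [hy.2]⟩
      have hkb := key_bound hmeas hμ s hr (le_of_lt hlt) hsub
      have hflip : |(∫ τ in s..x', μ τ) - (x' - s) * μ s|
          = |(∫ τ in x'..s, μ τ) - (s - x') * μ s| := by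
        rw [integral_symm x' s]
        rw [← abs_neg]
        congr 1
        ring
      rw [hflip]
      calc |x' - s|⁻¹ * |(∫ τ in x'..s, μ τ) - (s - x') * μ s|
          ≤ |x' - s|⁻¹ * (2 * |x' - s| * ⨍ y in Metric.closedBall s |x' - s|, ‖μ y - μ s‖) :=
            mul_le_mul_of_nonneg_left hkb (inv_nonneg.2 hr.le)
        _ = 2 * ⨍ y in Metric.closedBall s |x' - s|, ‖μ y - μ s‖ := by
            field_simp
    · have hsub : Set.Ioc s x' ⊆ Metric.closedBall s |x' - s| := by
        have habs : |x' - s| = x' - s := abs_of_pos (by linarith)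
        intro y hy
        rw [Metric.mem_closedBall, Real.dist_eq, abs_le, habs]
        exact ⟨by linarith [hy.1], by linarith [hy.2]⟩
      have hkb := key_bound hmeas hμ s hr (le_of_lt hgt) hsub
      calc |x' - s|⁻¹ * |(∫ τ in s..x', μ τ) - (x' - s) * μ s|
          ≤ |x' - s|⁻¹ * (2 * |x' - s| * ⨍ y in Metric.closedBall s |x' - s|, ‖μ y - μ s‖) :=
            mul_le_mul_of_nonneg_left hkb (inv_nonneg.2 hr.le)
        _ = 2 * ⨍ y in Metric.closedBall s |x' - s|, ‖μ y - μ s‖ := by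
            field_simp
  · intro hμs a ha
    have hμspos : 0 < μ s := lt_of_le_of_ne (hμ s).1 (Ne.symm hμs)
    have h1 : ∀ᶠ r in 𝓝[>] (0:ℝ),
        (⨍ y in Metric.closedBall s r, ‖μ y - μ s‖) < μ s / 2 :=
      hLs.eventually_lt_const (half_pos hμspos)
    have h2 : ∀ᶠ r in 𝓝[>] (0:ℝ), r < s - a :=
      eventually_nhdsWithin_of_eventually_nhds (gt_mem_nhds (by linarith))
    obtain ⟨r, havg, hras, hrpos⟩ := (h1.and (h2.and self_mem_nhdsWithin)).exists
    have hrpos' : (0:ℝ) < r := hrpos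
    have hsub : Set.Ioc (s - r) s ⊆ Metric.closedBall s r := by
      intro y hy
      rw [Metric.mem_closedBall, Real.dist_eq, abs_le]
      exact ⟨by linarith [hy.1], by linarith [hy.2]⟩
    have hkb := key_bound hmeas hμ s hrpos' (p := s - r) (q := s) (by linarith) hsub
    have h7 : s - (s - r) = r := by ring
    rw [h7] at hkb
    have hIpos : 0 < ∫ τ in (s - r)..s, μ τ := by
      have h6 := (abs_le.1 hkb).1
      nlinarith
    have hsplit := integral_add_adjacent_intervals (hInt a (s - r)) (hInt (s - r) s)
    have hnn : 0 ≤ ∫ τ in a..(s - r), μ τ :=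
      intervalIntegral.integral_nonneg (by linarith) (fun τ _ => (hμ τ).1)
    linarith

lemma det_smulRight_one (d : ℝ) :
    (ContinuousLinearMap.smulRight (1 : ℝ →L[ℝ] ℝ) d).det = d := by
  have h : ((ContinuousLinearMap.smulRight (1 : ℝ →L[ℝ] ℝ) d) :
      ℝ →ₗ[ℝ] ℝ) = d • LinearMap.id := by
    apply LinearMap.ext_ring
    simp
  rw [ContinuousLinearMap.det, h, LinearMap.det_smul, LinearMap.det_id,
    Module.finrank_self, pow_one, mul_one]


open scoped RealInnerProductSpace

/-- Trajectory equivalence under pseudo-time reparametrization (equation (57)):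
if `x̃` solves `ẋ̃ = μ(s)•f(x̃, u(s))` on `[t,T]` and `x` solves
`ẋ(s) = f(x(s), u(σ_μ⁻¹(s)))` on `[t, σ_μ(T)]` with the same initial condition, then
`x(σ_μ(s)) = x̃(s)` for all `s ∈ [t,T]`. -/
theorem stmt16 {n : ℕ} {U : Type*}
    (f : EuclideanSpace ℝ (Fin n) → U → EuclideanSpace ℝ (Fin n))
    (K : NNReal) (hf : ∀ u, LipschitzWith K (fun y => f y u))
    (t T : ℝ) (ht : t ≤ T)
    (μ : ℝ → ℝ) (hmeas : Measurable μ) (hμ : ∀ s, μ s ∈ Set.Icc (0:ℝ) 1)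
    (u : ℝ → U) (x₀ : EuclideanSpace ℝ (Fin n))
    (x xt : ℝ → EuclideanSpace ℝ (Fin n))
    (hxt : ∀ s ∈ Set.Icc t T, HasDerivAt xt (μ s • f (xt s) (u s)) s)
    (hx : ∀ s ∈ Set.Icc t (t + ∫ τ in t..T, μ τ),
      HasDerivAt x
        (f (x s) (u (sInf {τ | τ ∈ Set.Icc t T ∧ t + (∫ r in t..τ, μ r) = s}))) s)
    (hxt0 : xt t = x₀) (hx0 : x t = x₀) :
    ∀ s ∈ Set.Icc t T, x (t + ∫ τ in t..s, μ τ) = xt s := by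
  set σ : ℝ → ℝ := fun r => t + ∫ τ in t..r, μ τ with hσdef
  have hInt := mu_intervalIntegrable hmeas hμ
  have hσmono : ∀ a b : ℝ, a ≤ b → σ a ≤ σ b := by
    intro a b hab
    have h1 := integral_add_adjacent_intervals (hInt t a) (hInt a b)
    have h2 : 0 ≤ ∫ τ in a..b, μ τ :=
      intervalIntegral.integral_nonneg hab (fun τ _ => (hμ τ).1)
    simp only [hσdef]
    linarith
  have hσlip : ∀ a b : ℝ, a ≤ b → σ b - σ a ≤ b - a := by
    intro a b hab
    have h1 := integral_add_adjacent_intervals (hInt t a) (hInt a b)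
    have h2 : (∫ τ in a..b, μ τ) ≤ ∫ τ in a..b, (1:ℝ) :=
      intervalIntegral.integral_mono_on hab (hInt a b) intervalIntegrable_const
        (fun τ _ => (hμ τ).2)
    rw [intervalIntegral.integral_const, smul_eq_mul, mul_one] at h2
    simp only [hσdef]
    linarith
  have hσlip1 : LipschitzWith 1 σ := by
    apply LipschitzWith.of_dist_le_mul
    intro a b
    rw [Real.dist_eq, Real.dist_eq, NNReal.coe_one, one_mul]
    rcases le_total a b with hab | hab
    · rw [abs_sub_comm, abs_of_nonneg (by linarith [hσmono a b hab]),
        abs_sub_comm, abs_of_nonneg (by linarith)]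
      exact hσlip a b hab
    · rw [abs_of_nonneg (by linarith [hσmono b a hab]), abs_of_nonneg (by linarith)]
      exact hσlip b a hab
  have hσt : σ t = t := by simp [hσdef]
  have hσIcc : ∀ s ∈ Set.Icc t T, σ s ∈ Set.Icc t (σ T) := by
    intro s hs
    exact ⟨hσt ▸ hσmono t s hs.1, hσmono s T hs.2⟩
  set g : ℝ → EuclideanSpace ℝ (Fin n) := fun s => x (σ s) - xt s with hgdef
  set G2 : ℝ → ℝ := fun s => ⟪g s, g s⟫ with hG2def
  have hG2norm : ∀ s, G2 s = ‖g s‖ ^ 2 := fun s => real_inner_self_eq_norm_sq _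
  have hG2nonneg : ∀ s, 0 ≤ G2 s := fun s => by rw [hG2norm]; positivity
  have hG2t : G2 t = 0 := by
    simp only [hG2def, hgdef, hσt, hx0, hxt0, sub_self, inner_zero_left]
  -- pointwise Lipschitz property of G2 on Icc t T
  have hg_ptlip : ∀ s ∈ Set.Icc t T, ∃ C δ : ℝ, 0 < δ ∧ 0 ≤ C ∧
      ∀ s', |s' - s| ≤ δ → ‖g s' - g s‖ ≤ C * |s' - s| := by
    intro s hs
    obtain ⟨C1, hC1⟩ := Asymptotics.isBigO_iff.1 (hx (σ s) (hσIcc s hs)).isBigO_sub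
    obtain ⟨δ1, hδ1pos, hδ1⟩ := Metric.eventually_nhds_iff.1 hC1
    obtain ⟨C2, hC2⟩ := Asymptotics.isBigO_iff.1 (hxt s hs).isBigO_sub
    obtain ⟨δ2, hδ2pos, hδ2⟩ := Metric.eventually_nhds_iff.1 hC2
    refine ⟨|C1| + |C2|, min δ1 δ2 / 2, by positivity, by positivity, ?_⟩
    intro s' hs'
    have hd1 : dist (σ s') (σ s) < δ1 := by
      have := hσlip1.dist_le_mul s' s
      rw [NNReal.coe_one, one_mul, Real.dist_eq] at this
      calc dist (σ s') (σ s) ≤ |s' - s| := this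
        _ < δ1 := by
          have h1 := min_le_left δ1 δ2
          linarith
    have hd2 : dist s' s < δ2 := by
      rw [Real.dist_eq]
      have h1 := min_le_right δ1 δ2
      linarith
    have hb1 := hδ1 hd1
    have hb2 := hδ2 hd2
    simp only [Real.norm_eq_abs] at hb1 hb2
    have hσd : |σ s' - σ s| ≤ |s' - s| := by
      have := hσlip1.dist_le_mul s' s
      rw [NNReal.coe_one, one_mul, Real.dist_eq, Real.dist_eq] at this
      exact this
    calc ‖g s' - g s‖ = ‖(x (σ s') - x (σ s)) - (xt s' - xt s)‖ := by
          simp only [hgdef]; congr 1; abel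
      _ ≤ ‖x (σ s') - x (σ s)‖ + ‖xt s' - xt s‖ := norm_sub_le _ _
      _ ≤ C1 * |σ s' - σ s| + C2 * |s' - s| := add_le_add hb1 hb2
      _ ≤ |C1| * |s' - s| + |C2| * |s' - s| := by
          have e1 : C1 * |σ s' - σ s| ≤ |C1| * |s' - s| := by
            calc C1 * |σ s' - σ s| ≤ |C1| * |σ s' - σ s| :=
                  mul_le_mul_of_nonneg_right (le_abs_self _) (abs_nonneg _)
              _ ≤ |C1| * |s' - s| := mul_le_mul_of_nonneg_left hσd (abs_nonneg _)
          have e2 : C2 * |s' - s| ≤ |C2| * |s' - s| :=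
            mul_le_mul_of_nonneg_right (le_abs_self _) (abs_nonneg _)
          linarith
      _ = (|C1| + |C2|) * |s' - s| := by ring
  have hG2_ptlip : ∀ s ∈ Set.Icc t T, ∃ C δ : ℝ, 0 < δ ∧
      ∀ s', |s' - s| ≤ δ → |G2 s' - G2 s| ≤ C * |s' - s| := by
    intro s hs
    obtain ⟨C, δ, hδpos, hCpos, hC⟩ := hg_ptlip s hs
    refine ⟨C * (2 * ‖g s‖ + C * δ), δ, hδpos, ?_⟩
    intro s' hs'
    have h1 := hC s' hs'
    have h2 : |‖g s'‖ - ‖g s‖| ≤ ‖g s' - g s‖ := abs_norm_sub_norm_le _ _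
    have h3 : ‖g s'‖ ≤ ‖g s‖ + C * δ := by
      have := (abs_le.1 h2).2
      have h4 : C * |s' - s| ≤ C * δ := mul_le_mul_of_nonneg_left hs' hCpos
      linarith
    rw [hG2norm, hG2norm, abs_le]
    have hn1 := norm_nonneg (g s')
    have hn2 := norm_nonneg (g s)
    have hn3 := abs_nonneg (s' - s)
    have h5 := (abs_le.1 h2).1
    have h6 := (abs_le.1 h2).2
    constructor <;> nlinarith [mul_le_mul_of_nonneg_left hs' hCpos,
      mul_le_mul h1 h3 (norm_nonneg _) (by positivity : (0:ℝ) ≤ C * |s' - s|),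
      mul_le_mul h1 (le_refl ‖g s‖) hn2 (by positivity : (0:ℝ) ≤ C * |s' - s|)]
  -- good set derivative data
  set v : ℝ → EuclideanSpace ℝ (Fin n) := fun s =>
    f (x (σ s)) (u (sInf {τ | τ ∈ Set.Icc t T ∧ t + (∫ r in t..τ, μ r) = σ s})) with hvdef
  set dd : ℝ → EuclideanSpace ℝ (Fin n) :=
    fun s => μ s • v s - μ s • f (xt s) (u s) with hdddef
  set Dfun : ℝ → ℝ := fun s => ⟪g s, dd s⟫ + ⟪dd s, g s⟫ with hDdef
  have hgoodD : ∀ s ∈ Set.Icc t T,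
      HasDerivAt σ (μ s) s →
      (μ s ≠ 0 → ∀ a, a < s → 0 < ∫ τ in a..s, μ τ) →
      HasDerivAt G2 (Dfun s) s ∧ |Dfun s| ≤ 2 * (K : ℝ) * G2 s := by
    intro s hs hσd hpos
    have hxd : HasDerivAt x (v s) (σ s) := hx (σ s) (hσIcc s hs)
    have hyd0 : HasDerivAt (x ∘ σ) (μ s • v s) s :=
      HasDerivAt.scomp (g₁ := x) (h := σ) (x := s) hxd hσd
    have hyd : HasDerivAt (fun r => x (σ r)) (μ s • v s) s := hyd0
    have hgd : HasDerivAt g (dd s) s := hyd.sub (hxt s hs)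
    have hG2d : HasDerivAt G2 (Dfun s) s := hgd.inner ℝ hgd
    refine ⟨hG2d, ?_⟩
    have hdd : ‖dd s‖ ≤ (K : ℝ) * ‖g s‖ := by
      rcases eq_or_ne (μ s) 0 with hμ0 | hμ0
      · have : dd s = 0 := by simp [hdddef, hμ0]
        rw [this, norm_zero]
        positivity
      · have hsInf : sInf {τ | τ ∈ Set.Icc t T ∧ t + (∫ r in t..τ, μ r) = σ s} = s := by
          have hmem : s ∈ {τ | τ ∈ Set.Icc t T ∧ t + (∫ r in t..τ, μ r) = σ s} := ⟨hs, rfl⟩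
          apply le_antisymm
          · exact csInf_le ⟨t, fun τ hτ => hτ.1.1⟩ hmem
          · apply le_csInf ⟨s, hmem⟩
            intro τ hτ
            by_contra hlt
            push_neg at hlt
            have h0 := hpos hμ0 τ hlt
            have h1 := integral_add_adjacent_intervals (hInt t τ) (hInt τ s)
            have h2 : t + (∫ r in t..τ, μ r) < σ s := by
              simp only [hσdef]
              linarith
            exact absurd hτ.2 (ne_of_lt h2)
        have hveq : v s = f (x (σ s)) (u s) := by rw [hvdef]; simp only [hsInf]
        have hsplit : dd s = μ s • (f (x (σ s)) (u s) - f (xt s) (u s)) := by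
          rw [hdddef]; simp only [hveq, smul_sub]
        rw [hsplit, norm_smul, Real.norm_eq_abs]
        have hl := (hf (u s)).dist_le_mul (x (σ s)) (xt s)
        rw [dist_eq_norm, dist_eq_norm] at hl
        have habs : |μ s| ≤ 1 := abs_le.2 ⟨by linarith [(hμ s).1], (hμ s).2⟩
        calc |μ s| * ‖f (x (σ s)) (u s) - f (xt s) (u s)‖
            ≤ 1 * ((K : ℝ) * ‖x (σ s) - xt s‖) :=
              mul_le_mul habs hl (norm_nonneg _) one_pos.le
          _ = (K : ℝ) * ‖g s‖ := by rw [one_mul]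
    have hCS := abs_real_inner_le_norm (g s) (dd s)
    have hsymm : ⟪dd s, g s⟫ = ⟪g s, dd s⟫ := real_inner_comm _ _
    have h2 : |⟪g s, dd s⟫| ≤ ‖g s‖ * ((K : ℝ) * ‖g s‖) :=
      hCS.trans (mul_le_mul_of_nonneg_left hdd (norm_nonneg _))
    rw [hG2norm]
    calc |Dfun s| = |⟪g s, dd s⟫ + ⟪g s, dd s⟫| := by
          rw [show Dfun s = ⟪g s, dd s⟫ + ⟪dd s, g s⟫ from rfl, hsymm]
      _ ≤ |⟪g s, dd s⟫| + |⟪g s, dd s⟫| := abs_add_le _ _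
      _ ≤ 2 * (‖g s‖ * ((K : ℝ) * ‖g s‖)) := by linarith
      _ = 2 * (K : ℝ) * ‖g s‖ ^ 2 := by ring
  -- the bad set
  have hae := ae_good hmeas hμ t
  rw [← hσdef] at hae
  have hnull : volume {s : ℝ | ¬ (HasDerivAt σ (μ s) s ∧
      (μ s ≠ 0 → ∀ a, a < s → 0 < ∫ τ in a..s, μ τ))} = 0 := ae_iff.1 hae
  obtain ⟨N, hNsub, hNmeas, hNnull⟩ := exists_measurable_superset_of_null hnull
  -- continuity of G2 on Icc t T and clamped version
  have hG2contAt : ∀ s ∈ Set.Icc t T, ContinuousAt G2 s := by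
    intro s hs
    have h1 : ContinuousAt (fun r => x (σ r)) s :=
      ((hx (σ s) (hσIcc s hs)).continuousAt).comp hσlip1.continuous.continuousAt
    have h2 : ContinuousAt g s := h1.sub (hxt s hs).continuousAt
    exact h2.inner h2
  set c : ℝ → ℝ := fun r => max t (min r T) with hcdef
  have hcmem : ∀ r, c r ∈ Set.Icc t T :=
    fun r => ⟨le_max_left _ _, max_le ht (min_le_right r T)⟩
  have hceq : ∀ r ∈ Set.Icc t T, c r = r := by
    intro r hr
    rw [hcdef]
    simp only [min_eq_left hr.2, max_eq_right hr.1]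
  have hccont : Continuous c := continuous_const.max (continuous_id.min continuous_const)
  set Ghat : ℝ → ℝ := fun r => G2 (c r) with hGhatdef
  have hGhatcont : Continuous Ghat := by
    rw [continuous_iff_continuousAt]
    exact fun r => (hG2contAt (c r) (hcmem r)).comp hccont.continuousAt
  have hGhat_eq : ∀ r ∈ Set.Icc t T, Ghat r = G2 r := by
    intro r hr
    rw [hGhatdef]
    simp only [hceq r hr]
  have hGhat_nonneg : ∀ r, 0 ≤ Ghat r := fun r => hG2nonneg (c r)
  -- key integral inequality
  have hkey : ∀ b ∈ Set.Icc t T, G2 b ≤ 2 * (K : ℝ) * ∫ r in t..b, Ghat r := by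
    intro b hb
    set A : Set ℝ := Set.Icc t b \ N with hAdef
    have hAmeas : MeasurableSet A := measurableSet_Icc.diff hNmeas
    have hAgood : ∀ s ∈ A, s ∈ Set.Icc t T ∧ HasDerivAt σ (μ s) s ∧
        (μ s ≠ 0 → ∀ a, a < s → 0 < ∫ τ in a..s, μ τ) := by
      intro s hsA
      have hsT : s ∈ Set.Icc t T := ⟨hsA.1.1, hsA.1.2.trans hb.2⟩
      refine ⟨hsT, ?_⟩
      by_contra hcon
      exact hsA.2 (hNsub hcon)
    have hfder : ∀ s ∈ A, HasFDerivWithinAt G2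
        (ContinuousLinearMap.smulRight (1 : ℝ →L[ℝ] ℝ) (Dfun s)) A s := by
      intro s hsA
      obtain ⟨hsT, h1, h2⟩ := hAgood s hsA
      exact ((hgoodD s hsT h1 h2).1.hasFDerivAt).hasFDerivWithinAt
    have himg := addHaar_image_le_lintegral_abs_det_fderiv volume hAmeas hfder
    have hsub1 : Set.Icc (0:ℝ) (G2 b) ⊆ G2 '' Set.Icc t b := by
      have hconn : IsPreconnected (G2 '' Set.Icc t b) :=
        isPreconnected_Icc.image G2
          (fun s hs => (hG2contAt s ⟨hs.1, hs.2.trans hb.2⟩).continuousWithinAt)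
      have h0 : (0:ℝ) ∈ G2 '' Set.Icc t b := ⟨t, ⟨le_refl t, hb.1⟩, hG2t⟩
      have h1 : G2 b ∈ G2 '' Set.Icc t b := ⟨b, ⟨hb.1, le_refl b⟩, rfl⟩
      exact hconn.Icc_subset h0 h1
    have e1 : ENNReal.ofReal (G2 b) ≤ volume (G2 '' Set.Icc t b) := by
      calc ENNReal.ofReal (G2 b) = volume (Set.Icc (0:ℝ) (G2 b)) := by
            rw [Real.volume_Icc, sub_zero]
        _ ≤ _ := measure_mono hsub1
    have e2 : volume (G2 '' Set.Icc t b)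
        ≤ volume (G2 '' A) + volume (G2 '' (Set.Icc t b \ A)) := by
      calc volume (G2 '' Set.Icc t b)
          ≤ volume (G2 '' A ∪ G2 '' (Set.Icc t b \ A)) := by
            apply measure_mono
            rw [← Set.image_union]
            apply Set.image_mono
            intro z hz
            exact (em (z ∈ A)).imp id (fun h => ⟨hz, h⟩)
        _ ≤ _ := measure_union_le _ _
    have e3 : volume (G2 '' (Set.Icc t b \ A)) = 0 := by
      apply null_image_of_pointwise_lip
      · refine measure_mono_null ?_ hNnull
        intro z hz
        by_contra hzN
        exact hz.2 ⟨hz.1, hzN⟩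
      · intro s hsE
        exact hG2_ptlip s ⟨hsE.1.1, hsE.1.2.trans hb.2⟩
    have e4 : volume (G2 '' A) ≤ ∫⁻ s in A, ENNReal.ofReal (2 * (K : ℝ) * Ghat s) := by
      refine le_trans himg ?_
      apply lintegral_mono_ae
      rw [ae_restrict_iff' hAmeas]
      filter_upwards with s hsA
      rw [det_smulRight_one]
      apply ENNReal.ofReal_le_ofReal
      obtain ⟨hsT, h1, h2⟩ := hAgood s hsA
      rw [hGhat_eq s hsT]
      exact (hgoodD s hsT h1 h2).2
    have e5 : (∫⁻ s in A, ENNReal.ofReal (2 * (K : ℝ) * Ghat s))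
        ≤ ∫⁻ s in Set.Icc t b, ENNReal.ofReal (2 * (K : ℝ) * Ghat s) :=
      lintegral_mono_set Set.diff_subset
    have hGint : IntegrableOn (fun s => 2 * (K : ℝ) * Ghat s) (Set.Icc t b) volume :=
      Continuous.integrableOn_Icc (continuous_const.mul hGhatcont)
    have e6 : (∫⁻ s in Set.Icc t b, ENNReal.ofReal (2 * (K : ℝ) * Ghat s))
        = ENNReal.ofReal (∫ s in Set.Icc t b, 2 * (K : ℝ) * Ghat s) :=
      (ofReal_integral_eq_lintegral_ofReal hGint
        (Filter.Eventually.of_forall fun s => by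
          have := hGhat_nonneg s
          positivity)).symm
    have e7 : (∫ s in Set.Icc t b, 2 * (K : ℝ) * Ghat s)
        = 2 * (K : ℝ) * ∫ r in t..b, Ghat r := by
      rw [integral_Icc_eq_integral_Ioc, ← intervalIntegral.integral_of_le hb.1,
        intervalIntegral.integral_const_mul]
    have hfinal : ENNReal.ofReal (G2 b)
        ≤ ENNReal.ofReal (2 * (K : ℝ) * ∫ r in t..b, Ghat r) := by
      rw [← e7, ← e6]
      refine e1.trans (e2.trans ?_)
      rw [e3, add_zero]
      exact e4.trans e5
    have hrhs : 0 ≤ 2 * (K : ℝ) * ∫ r in t..b, Ghat r := by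
      have hi0 : 0 ≤ ∫ r in t..b, Ghat r :=
        intervalIntegral.integral_nonneg hb.1 (fun r _ => hGhat_nonneg r)
      positivity
    exact (ENNReal.ofReal_le_ofReal_iff hrhs).1 hfinal
  -- Gronwall
  set H : ℝ → ℝ := fun b => ∫ r in t..b, Ghat r with hHdef
  have hHd : ∀ b, HasDerivAt H (Ghat b) b :=
    fun b => (hGhatcont.integral_hasStrictDerivAt t b).hasDerivAt
  have hHnonneg : ∀ b, t ≤ b → 0 ≤ H b := by
    intro b hbt
    simp only [hHdef]
    exact intervalIntegral.integral_nonneg hbt (fun r _ => hGhat_nonneg r)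
  have hg0 := norm_le_gronwallBound_of_norm_deriv_right_le (f := H) (f' := Ghat)
      (δ := 0) (K := 2 * (K : ℝ)) (ε := 0) (a := t) (b := T)
      (fun b _ => (hHd b).continuousAt.continuousWithinAt)
      (fun b _ => (hHd b).hasDerivWithinAt)
      (by simp [hHdef])
      (fun s hs => by
        have h1 := hkey s ⟨hs.1, hs.2.le⟩
        have h2 := hGhat_eq s ⟨hs.1, hs.2.le⟩
        rw [Real.norm_eq_abs, Real.norm_eq_abs, abs_of_nonneg (hGhat_nonneg s),
          abs_of_nonneg (hHnonneg s hs.1), h2]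
        simp only [hHdef]
        linarith)
  intro s hs
  have hH0 : H s = 0 := by
    have h1 := hg0 s hs
    rw [gronwallBound_ε0_δ0, Real.norm_eq_abs, abs_of_nonneg (hHnonneg s hs.1)] at h1
    linarith [hHnonneg s hs.1]
  have hG2b : G2 s ≤ 0 := by
    have h1 := hkey s hs
    have h2 := hH0
    simp only [hHdef] at h2
    rw [h2, mul_zero] at h1
    exact h1
  have hnz : ‖g s‖ = 0 := by
    have h1 : ‖g s‖ ^ 2 ≤ 0 := by rw [← hG2norm]; exact hG2b
    have h2 : ‖g s‖ ^ 2 = 0 := le_antisymm h1 (sq_nonneg _)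
    exact sq_eq_zero_iff.1 h2
  have hgz : g s = 0 := norm_eq_zero.1 hnz
  have hfin : x (σ s) = xt s := sub_eq_zero.1 hgz
  simpa only [hσdef] using hfin
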